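/- Lemma 2 (ℓ1 norm of the screened marginal ν^sc, explicit form): ‖ν^sc‖₁ ≤ (1/κ)·Σ_{j∈J} ν_j + (m − m_b)·( n_b·κ·(max_{i∈I} μ_i)/(m K_min) + (n − n_b)·ε² ), where ‖·‖₁ is the ℓ1 norm. -/

import Mathlib

/-!
On the active sets the lower bounds are slack at the screened optimum, so `Ψ_κ` is stationary in
the directions `u_i` (`i ∈ I`) and `v_j` (`j ∈ J`): row `i` of `B = B(u^sc, v^sc)` sums to `κ μ_i`
and column `j` sums to `ν_j / κ`. This accounts for the columns in `J` exactly. A column `j ∉ J`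
has `e^{v_j} = εκ`; its entries in rows `i ∈ I` are at most `κ μ_i / (m K_min)`, since each of the
`m` entries of row `i` is at least `e^{u_i} K_min εκ`, and its entries in rows `i ∉ I` equal
`ε² K_ij ≤ ε²`.
-/

open scoped Classical

section

open Real Finset Function

variable {ι ι' : Type*}

theorem eq_of_isLocalMin_add_mul_exp_sub_one_sub_mul {b A c : ℝ}
    (h : IsLocalMin (fun t => b + A * (exp t - 1) - c * t) 0) : A = c := by
  have hd := ((((hasDerivAt_exp 0).sub_const 1).const_mul A).const_add b).sub
    ((hasDerivAt_id' 0).const_mul c)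
  have := h.hasDerivAt_eq_zero hd
  simp only [exp_zero, mul_one] at this
  linarith

theorem sum_comp_update [Fintype ι] [DecidableEq ι] (F : ι → ℝ → ℝ) (u : ι → ℝ) (i : ι) (x : ℝ) :
    ∑ k, F k (update u i x k) = ∑ k, F k (u k) + (F i x - F i (u i)) := by
  rw [← add_sum_erase _ _ (mem_univ i), ← add_sum_erase _ _ (mem_univ i), update_self]
  have hrest : ∑ k ∈ univ.erase i, F k (update u i x k) = ∑ k ∈ univ.erase i, F k (u k) :=
    sum_congr rfl fun k hk => by rw [update_of_ne (ne_of_mem_erase hk)]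
  rw [hrest]
  ring

theorem sum_compl_le_card_compl_mul [Fintype ι] [DecidableEq ι] (s : Finset ι) {f : ι → ℝ} {b : ℝ}
    (h : ∀ i ∉ s, f i ≤ b) : ∑ i ∈ sᶜ, f i ≤ ((Fintype.card ι : ℝ) - #s) * b := by
  calc ∑ i ∈ sᶜ, f i ≤ #sᶜ • b := sum_le_card_nsmul _ _ _ fun i hi => h i (mem_compl.1 hi)
    _ = ((Fintype.card ι : ℝ) - #s) * b := by
      rw [nsmul_eq_mul, card_compl, Nat.cast_sub s.card_le_univ]

/-- The dual objective `Ψ_κ(u, v)`. -/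
noncomputable def dualObjective [Fintype ι] [Fintype ι'] (K : ι → ι' → ℝ) (μ : ι → ℝ)
    (ν : ι' → ℝ) (κ : ℝ) (u : ι → ℝ) (v : ι' → ℝ) : ℝ :=
  (∑ i, ∑ j, exp (u i) * K i j * exp (v j)) - κ * (∑ i, u i * μ i) - (1 / κ) * (∑ j, v j * ν j)

variable {K : ι → ι' → ℝ} {μ : ι → ℝ} {ν : ι' → ℝ} {κ : ℝ} {u : ι → ℝ} {v : ι' → ℝ}

theorem dualObjective_swap [Fintype ι] [Fintype ι'] :
    dualObjective K μ ν κ u v = dualObjective (fun j i => K i j) ν μ κ⁻¹ v u := by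
  unfold dualObjective
  have hB : ∀ i j, exp (u i) * K i j * exp (v j) = exp (v j) * K i j * exp (u i) :=
    fun _ _ => by ring
  simp only [hB, one_div, inv_inv]
  rw [sum_comm]
  ring

theorem dualObjective_update_left [Fintype ι] [Fintype ι'] [DecidableEq ι] (i : ι) (t : ℝ) :
    dualObjective K μ ν κ (update u i (u i + t)) v =
      dualObjective K μ ν κ u v + (∑ j, exp (u i) * K i j * exp (v j)) * (exp t - 1)
        - κ * μ i * t := by
  unfold dualObjective
  have hrow : ∑ j, exp (u i + t) * K i j * exp (v j) =
      exp t * ∑ j, exp (u i) * K i j * exp (v j) := by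
    simp only [exp_add, mul_sum]
    exact sum_congr rfl fun j _ => by ring
  rw [sum_comp_update (fun k x => ∑ j, exp x * K k j * exp (v j)),
    sum_comp_update (fun k x => x * μ k), hrow]
  ring

theorem rowSum_eq_of_isLocalMin [Fintype ι] [Fintype ι'] [DecidableEq ι] {i : ι}
    (h : IsLocalMin (fun t => dualObjective K μ ν κ (update u i (u i + t)) v) 0) :
    ∑ j, exp (u i) * K i j * exp (v j) = κ * μ i := by
  simp only [dualObjective_update_left] at h
  exact eq_of_isLocalMin_add_mul_exp_sub_one_sub_mul h

theorem colSum_eq_of_isLocalMin [Fintype ι] [Fintype ι'] [DecidableEq ι'] {j : ι'}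
    (h : IsLocalMin (fun t => dualObjective K μ ν κ u (update v j (v j + t))) 0) :
    ∑ i, exp (u i) * K i j * exp (v j) = ν j / κ := by
  simp only [dualObjective_swap (K := K)] at h
  rw [div_eq_inv_mul, ← rowSum_eq_of_isLocalMin h]
  exact sum_congr rfl fun i _ => by ring

theorem isLocalMin_update_add [DecidableEq ι] {f : (ι → ℝ) → ℝ} {a : ℝ} {I : Finset ι} {i : ι}
    (ha : 0 < a) (hu : ∀ k, a ≤ exp (u k)) (hout : ∀ k ∉ I, u k = log a)
    (hmin : ∀ u' : ι → ℝ, (∀ k, a ≤ exp (u' k)) → (∀ k ∉ I, u' k = log a) → f u ≤ f u')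
    (hi : a < exp (u i)) :
    IsLocalMin (fun t => f (update u i (u i + t))) 0 := by
  have hiI : i ∈ I := by
    by_contra hiI
    rw [hout i hiI, exp_log ha] at hi
    exact lt_irrefl a hi
  have hlt : log a - u i < 0 := sub_neg.2 ((log_lt_iff_lt_exp ha).2 hi)
  filter_upwards [Ici_mem_nhds hlt] with t ht
  simp only [add_zero, update_eq_self]
  refine hmin _ (fun k => ?_) fun k hk => ?_
  · rcases eq_or_ne k i with rfl | hki
    · rw [update_self, ← log_le_iff_le_exp ha]
      linarith [Set.mem_Ici.1 ht]
    · rw [update_of_ne hki]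
      exact hu k
  · rw [update_of_ne (ne_of_mem_of_not_mem hiI hk).symm]
    exact hout k hk

theorem entry_le_rowSum_div [Fintype ι'] {Kmin b : ℝ} {i : ι} {j : ι'} (hKmin : 0 < Kmin)
    (hKle : ∀ j, Kmin ≤ K i j) (hK1 : K i j ≤ 1) (hv : ∀ j, b ≤ exp (v j)) (hvj : exp (v j) = b) :
    exp (u i) * K i j * exp (v j) ≤
      (∑ j, exp (u i) * K i j * exp (v j)) / (Fintype.card ι' * Kmin) := by
  have hb : 0 < b := hvj ▸ exp_pos _
  have hcard : 0 < (Fintype.card ι' : ℝ) := Nat.cast_pos.2 (Fintype.card_pos_iff.2 ⟨j⟩)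
  rw [le_div_iff₀ (by positivity)]
  calc exp (u i) * K i j * exp (v j) * (Fintype.card ι' * Kmin)
      ≤ exp (u i) * 1 * b * (Fintype.card ι' * Kmin) := by rw [hvj]; gcongr
    _ = Fintype.card ι' • (exp (u i) * Kmin * b) := by rw [nsmul_eq_mul]; ring
    _ ≤ ∑ j, exp (u i) * K i j * exp (v j) := card_nsmul_le_sum _ _ _ fun j _ =>
        mul_le_mul (mul_le_mul_of_nonneg_left (hKle j) (exp_pos _).le) (hv j) hb.le
          (mul_nonneg (exp_pos _).le (hKmin.trans_le (hKle j)).le)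

theorem colSum_le_of_rowSum_le [Fintype ι] [Fintype ι'] [DecidableEq ι] {I : Finset ι}
    {Kmin a b R : ℝ} {j : ι'} (hKmin : 0 < Kmin)
    (hKle : ∀ i j, Kmin ≤ K i j) (hK1 : ∀ i j, K i j ≤ 1)
    (hrow : ∀ i ∈ I, ∑ j, exp (u i) * K i j * exp (v j) ≤ R) (hu : ∀ i ∉ I, exp (u i) = a)
    (hv : ∀ j, b ≤ exp (v j)) (hvj : exp (v j) = b) :
    ∑ i, exp (u i) * K i j * exp (v j) ≤
      #I * (R / (Fintype.card ι' * Kmin)) + (Fintype.card ι - #I) * (a * b) := by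
  have hcard : 0 < (Fintype.card ι' : ℝ) := Nat.cast_pos.2 (Fintype.card_pos_iff.2 ⟨j⟩)
  rw [← sum_add_sum_compl I, ← nsmul_eq_mul]
  refine add_le_add (sum_le_card_nsmul _ _ _ fun i hi => ?_)
    (sum_compl_le_card_compl_mul I fun i hi => ?_)
  · exact (entry_le_rowSum_div hKmin (hKle i) (hK1 i j) hv hvj).trans
      (div_le_div_of_nonneg_right (hrow i hi) (by positivity))
  · rw [hu i hi, hvj]
    have ha : 0 < a := hu i hi ▸ exp_pos _
    have hb : 0 < b := hvj ▸ exp_pos _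
    nlinarith [mul_le_mul_of_nonneg_left (hK1 i j) (mul_pos ha hb).le]

end

theorem l1_norm_screened_marginal_nu_general
    (n m : ℕ)
    (C : Fin n → Fin m → ℝ) (hC : ∀ i j, 0 ≤ C i j)
    (η : ℝ) (hη : 0 < η)
    (K : Fin n → Fin m → ℝ) (hK : ∀ i j, K i j = Real.exp (-(C i j) / η))
    (μ : Fin n → ℝ) (ν : Fin m → ℝ)
    (ε κ : ℝ) (hε : 0 < ε) (hκ : 0 < κ)
    (I : Finset (Fin n))
    (J : Finset (Fin m))
    (Kmin : ℝ) (hKmin_le : ∀ i j, Kmin ≤ K i j) (hKmin_mem : ∃ i j, K i j = Kmin)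
    (usc : Fin n → ℝ) (vsc : Fin m → ℝ)
    (husc_feas : ∀ i, ε / κ ≤ Real.exp (usc i))
    (hvsc_feas : ∀ j, ε * κ ≤ Real.exp (vsc j))
    (husc_out : ∀ i ∉ I, usc i = Real.log (ε / κ))
    (hvsc_out : ∀ j ∉ J, vsc j = Real.log (ε * κ))
    (hsc_min : ∀ (u : Fin n → ℝ) (v : Fin m → ℝ),
      (∀ i, ε / κ ≤ Real.exp (u i)) → (∀ j, ε * κ ≤ Real.exp (v j)) →
      (∀ i ∉ I, u i = Real.log (ε / κ)) → (∀ j ∉ J, v j = Real.log (ε * κ)) →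
      (∑ i, ∑ j, Real.exp (usc i) * K i j * Real.exp (vsc j))
          - κ * (∑ i, usc i * μ i) - (1 / κ) * (∑ j, vsc j * ν j)
        ≤ (∑ i, ∑ j, Real.exp (u i) * K i j * Real.exp (v j))
          - κ * (∑ i, u i * μ i) - (1 / κ) * (∑ j, v j * ν j))
    (hactive_u : ∀ i ∈ I, ε / κ < Real.exp (usc i))
    (hactive_v : ∀ j ∈ J, ε * κ < Real.exp (vsc j))
    (νsc : Fin m → ℝ)
    (hνsc : ∀ j, νsc j = ∑ i, Real.exp (usc i) * K i j * Real.exp (vsc j))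
    (μmaxI : ℝ)
    (hμmaxI : (∃ i ∈ I, μ i = μmaxI) ∧ ∀ i ∈ I, μ i ≤ μmaxI) :
    ∑ j, |νsc j| ≤
      (1 / κ) * (∑ j ∈ J, ν j) +
        ((m : ℝ) - J.card) *
          ((I.card : ℝ) * κ * μmaxI / ((m : ℝ) * Kmin) + ((n : ℝ) - I.card) * ε ^ 2) := by
  open Real Finset in
  have hK1 : ∀ i j, K i j ≤ 1 := fun i j => by
    rw [hK, exp_le_one_iff]
    exact div_nonpos_of_nonpos_of_nonneg (neg_nonpos.2 (hC i j)) hη.le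
  have hKmin : 0 < Kmin := hKmin_mem.elim fun i ⟨j, hij⟩ => hij ▸ hK i j ▸ exp_pos _
  have hrow : ∀ i ∈ I, ∑ j, exp (usc i) * K i j * exp (vsc j) = κ * μ i := fun i hi =>
    rowSum_eq_of_isLocalMin <| isLocalMin_update_add (f := fun u => dualObjective K μ ν κ u vsc)
      (by positivity) husc_feas husc_out
      (fun u hu hu_out => hsc_min u vsc hu hvsc_feas hu_out hvsc_out) (hactive_u i hi)
  have hcol : ∀ j ∈ J, νsc j = ν j / κ := fun j hj => (hνsc j).trans <|
    colSum_eq_of_isLocalMin <| isLocalMin_update_add (f := fun v => dualObjective K μ ν κ usc v)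
      (by positivity) hvsc_feas hvsc_out
      (fun v hv hv_out => hsc_min usc v husc_feas hv husc_out hv_out) (hactive_v j hj)
  have hout : ∀ j ∉ J, νsc j ≤ #I * κ * μmaxI / (m * Kmin) + (n - #I) * ε ^ 2 := fun j hj => by
    have hbound := colSum_le_of_rowSum_le (a := ε / κ) (R := κ * μmaxI) hKmin hKmin_le hK1
      (fun i hi => (hrow i hi).trans_le (mul_le_mul_of_nonneg_left (hμmaxI.2 i hi) hκ.le))
      (fun i hi => by rw [husc_out i hi, exp_log (by positivity)]) hvsc_feas
      (by rw [hvsc_out j hj, exp_log (by positivity)])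
    rw [hνsc j]
    convert hbound using 2
    · simp only [Fintype.card_fin]
      ring
    · simp only [Fintype.card_fin]
      field_simp
  calc ∑ j, |νsc j| = ∑ j ∈ J, νsc j + ∑ j ∈ Jᶜ, νsc j := by
        rw [sum_add_sum_compl]
        exact sum_congr rfl fun j _ => abs_of_nonneg (hνsc j ▸ sum_nonneg fun i _ => by
          rw [hK]; positivity)
    _ ≤ _ := by
      refine add_le_add (le_of_eq ?_) (by simpa using sum_compl_le_card_compl_mul J hout)
      rw [mul_sum]
      exact sum_congr rfl fun j hj => by rw [hcol j hj]; ring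

theorem l1_norm_screened_marginal_nu
    (n m : ℕ) (hn : 0 < n) (hm : 0 < m)
    (C : Fin n → Fin m → ℝ) (hC : ∀ i j, 0 ≤ C i j)
    (η : ℝ) (hη : 0 < η)
    (K : Fin n → Fin m → ℝ) (hK : ∀ i j, K i j = Real.exp (-(C i j) / η))
    (μ : Fin n → ℝ) (ν : Fin m → ℝ)
    (hμpos : ∀ i, 0 < μ i) (hνpos : ∀ j, 0 < ν j)
    (hμsum : ∑ i, μ i = 1) (hνsum : ∑ j, ν j = 1)
    (ε κ : ℝ) (hε : 0 < ε) (hκ : 0 < κ)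
    (I : Finset (Fin n)) (hI : ∀ i, i ∈ I ↔ ε ^ 2 / κ * (∑ j, K i j) ≤ μ i)
    (J : Finset (Fin m)) (hJ : ∀ j, j ∈ J ↔ κ * ε ^ 2 * (∑ i, K i j) ≤ ν j)
    (hIne : I.Nonempty) (hJne : J.Nonempty)
    (Kmin : ℝ) (hKmin_le : ∀ i j, Kmin ≤ K i j) (hKmin_mem : ∃ i j, K i j = Kmin)
    (usc : Fin n → ℝ) (vsc : Fin m → ℝ)
    (husc_feas : ∀ i, ε / κ ≤ Real.exp (usc i))
    (hvsc_feas : ∀ j, ε * κ ≤ Real.exp (vsc j))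
    (husc_out : ∀ i ∉ I, usc i = Real.log (ε / κ))
    (hvsc_out : ∀ j ∉ J, vsc j = Real.log (ε * κ))
    (hsc_min : ∀ (u : Fin n → ℝ) (v : Fin m → ℝ),
      (∀ i, ε / κ ≤ Real.exp (u i)) → (∀ j, ε * κ ≤ Real.exp (v j)) →
      (∀ i ∉ I, u i = Real.log (ε / κ)) → (∀ j ∉ J, v j = Real.log (ε * κ)) →
      (∑ i, ∑ j, Real.exp (usc i) * K i j * Real.exp (vsc j))
          - κ * (∑ i, usc i * μ i) - (1 / κ) * (∑ j, vsc j * ν j)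
        ≤ (∑ i, ∑ j, Real.exp (u i) * K i j * Real.exp (v j))
          - κ * (∑ i, u i * μ i) - (1 / κ) * (∑ j, v j * ν j))
    (hactive_u : ∀ i ∈ I, ε / κ < Real.exp (usc i))
    (hactive_v : ∀ j ∈ J, ε * κ < Real.exp (vsc j))
    (νsc : Fin m → ℝ)
    (hνsc : ∀ j, νsc j = ∑ i, Real.exp (usc i) * K i j * Real.exp (vsc j))
    (μmaxI : ℝ)
    (hμmaxI : (∃ i ∈ I, μ i = μmaxI) ∧ ∀ i ∈ I, μ i ≤ μmaxI) :
    ∑ j, |νsc j| ≤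
      (1 / κ) * (∑ j ∈ J, ν j) +
        ((m : ℝ) - J.card) *
          ((I.card : ℝ) * κ * μmaxI / ((m : ℝ) * Kmin) + ((n : ℝ) - I.card) * ε ^ 2) :=
  l1_norm_screened_marginal_nu_general n m C hC η hη K hK μ ν ε κ hε hκ I J Kmin hKmin_le hKmin_mem
    usc vsc husc_feas hvsc_feas husc_out hvsc_out hsc_min hactive_u hactive_v νsc hνsc μmaxI hμmaxI
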